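/- The double ray (the two-way infinite path) has small automorphisms: the shift by one is a small automorphism, and there exists an edge colouring with 2 colours of the double ray that breaks every small automorphism. -/

import Mathlib

open SimpleGraph

/-- An edge colouring `c` preserves an automorphism `φ` if every edge is mapped
to an edge of the same colour. -/
def Preserves {V C : Type*} (G : SimpleGraph V) (c : Sym2 V → C) (φ : G ≃g G) : Prop :=
  ∀ u v : V, G.Adj u v → c s(φ u, φ v) = c s(u, v)

/-- An edge colouring `c` breaks an automorphism `φ` if it does not preserve it. -/
def Breaks {V C : Type*} (G : SimpleGraph V) (c : Sym2 V → C) (φ : G ≃g G) : Prop :=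
  ¬ Preserves G c φ

/-- An automorphism is small if it moves some vertex to a neighbour. -/
def IsSmall {V : Type*} (G : SimpleGraph V) (φ : G ≃g G) : Prop :=
  ∃ v : V, G.Adj v (φ v)

/-- The double ray: the two-way infinite path on `ℤ`. -/
def doubleRay : SimpleGraph ℤ :=
  SimpleGraph.fromRel (fun i j => j = i + 1)

/-!
Every automorphism of the double ray is a translation `i ↦ t + i` or a reflection `i ↦ t - i`,
since its increments `φ (i + 1) - φ i` are `±1` and injectivity forbids a change of sign.
A small automorphism is not the identity. Colour the edges `{0,1}`, `{1,2}`, `{3,4}` with `1` and all others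
with `0`. The lower endpoints `0, 1, 3` of the edges of colour `1` form a set without
nontrivial translation or reflection symmetry, so the identity is the only automorphism
preserving this colouring.
-/

lemma IsSmall.ne_refl {V : Type*} {G : SimpleGraph V} {φ : G ≃g G} (h : IsSmall G φ) :
    φ ≠ Iso.refl := by
  obtain ⟨v, hv⟩ := h
  rintro rfl
  exact hv.ne rfl

lemma Int.eq_add_zsmul_of_forall_add_one {G : Type*} [AddGroup G] {f : ℤ → G} {c : G}
    (h : ∀ i, f (i + 1) = f i + c) (i : ℤ) : f i = f 0 + i • c := by
  induction i using Int.induction_on with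
  | zero => simp
  | succ k ih => rw [h, ih, add_zsmul, one_zsmul, add_assoc]
  | pred k ih =>
    have hk : f (-k) = f (-k - 1) + c := by rw [← h, sub_add_cancel]
    rw [sub_zsmul, one_zsmul, ← add_assoc, ← ih, hk, add_neg_cancel_right]

namespace doubleRay

lemma adj_iff {i j : ℤ} : doubleRay.Adj i j ↔ j = i + 1 ∨ i = j + 1 := by
  simp only [doubleRay, fromRel_adj]
  omega

lemma adj_add_one (i : ℤ) : doubleRay.Adj i (i + 1) := adj_iff.2 (Or.inl rfl)

def shift : doubleRay ≃g doubleRay where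
  toEquiv := Equiv.addRight 1
  map_rel_iff' := by
    intro a b
    simp only [Equiv.coe_addRight, adj_iff]
    omega

lemma iso_apply_add_one (φ : doubleRay ≃g doubleRay) (i : ℤ) :
    φ (i + 1) = φ i + 1 ∨ φ (i + 1) = φ i - 1 := by
  have := adj_iff.1 (φ.map_adj_iff.2 (adj_add_one i))
  omega

lemma iso_eq_translation_or_reflection (φ : doubleRay ≃g doubleRay) :
    ∃ t, (∀ i, φ i = t + i) ∨ (∀ i, φ i = t - i) := by
  have hstep : ∀ i, φ (i + 1 + 1) - φ (i + 1) = φ (i + 1) - φ i := by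
    intro i
    have hne : φ (i + 1 + 1) ≠ φ i := fun h => by have := φ.injective h; omega
    rcases iso_apply_add_one φ i with h | h <;>
      rcases iso_apply_add_one φ (i + 1) with h' | h' <;> omega
  have hconst : ∀ i, φ (i + 1) - φ i = φ 1 - φ 0 := by
    simpa using Int.eq_add_zsmul_of_forall_add_one (f := fun i => φ (i + 1) - φ i) (c := 0)
      (by simpa using hstep)
  have hlin := Int.eq_add_zsmul_of_forall_add_one (f := φ) (c := φ 1 - φ 0)
    (fun i => by rw [← hconst i]; ring)
  obtain hd | hd : φ 1 - φ 0 = 1 ∨ φ 1 - φ 0 = -1 := by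
    have := iso_apply_add_one φ 0
    rw [zero_add] at this
    omega
  · exact ⟨φ 0, Or.inl fun i => by rw [hlin i, hd, smul_eq_mul, mul_one]⟩
  · exact ⟨φ 0, Or.inr fun i => by rw [hlin i, hd, smul_eq_mul, mul_neg_one, sub_eq_add_neg]⟩

end doubleRay

def lowerEndColouring {C : Type*} (p : ℤ → C) : Sym2 ℤ → C :=
  Sym2.lift ⟨fun a b => p (min a b), fun a b => congrArg p (min_comm a b)⟩

def asymmetricPattern (i : ℤ) : Fin 2 :=
  if i = 0 ∨ i = 1 ∨ i = 3 then 1 else 0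

lemma asymmetricPattern_eq_iff {a b : ℤ} :
    asymmetricPattern a = asymmetricPattern b ↔
      (a = 0 ∨ a = 1 ∨ a = 3 ↔ b = 0 ∨ b = 1 ∨ b = 3) := by
  unfold asymmetricPattern
  split_ifs <;> simp_all

lemma eq_refl_of_preserves_lowerEndColouring_asymmetricPattern {φ : doubleRay ≃g doubleRay}
    (hφ : Preserves doubleRay (lowerEndColouring asymmetricPattern) φ) : φ = Iso.refl := by
  have key : ∀ k, (min (φ k) (φ (k + 1)) = 0 ∨ min (φ k) (φ (k + 1)) = 1 ∨
      min (φ k) (φ (k + 1)) = 3 ↔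
        min k (k + 1) = 0 ∨ min k (k + 1) = 1 ∨ min k (k + 1) = 3) := fun k =>
    asymmetricPattern_eq_iff.1 (hφ k (k + 1) (doubleRay.adj_add_one k))
  have h0 := key 0
  have h1 := key 1
  obtain ⟨t, htr | hre⟩ := doubleRay.iso_eq_translation_or_reflection φ
  · ext i
    show φ i = i
    simp only [htr] at h0 h1 ⊢
    omega
  · have h3 := key 3
    simp only [hre] at h0 h1 h3
    omega

/-- The shift by one is a small automorphism of the double ray, and there is an
edge colouring of the double ray with two colours breaking every small
automorphism. -/
theorem doubleRay_small_shift_and_colouring :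
    (∃ φ : doubleRay ≃g doubleRay, (∀ i : ℤ, φ i = i + 1) ∧ IsSmall doubleRay φ) ∧
    (∃ c : Sym2 ℤ → Fin 2, ∀ φ : doubleRay ≃g doubleRay,
      IsSmall doubleRay φ → Breaks doubleRay c φ) :=
  ⟨⟨doubleRay.shift, fun _ => rfl, 0, doubleRay.adj_add_one 0⟩,
    lowerEndColouring asymmetricPattern, fun _ hsmall hφ =>
      hsmall.ne_refl (eq_refl_of_preserves_lowerEndColouring_asymmetricPattern hφ)⟩
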